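/- arXiv:1212.0649 — 2 statements merged into one kernel-verified Lean document; each statement's English description precedes it below -/
import Mathlib

section
/- If a point is strictly farther than d from two points that are themselves within distance d of each other, it sees them at an angle strictly less than π/3: if d > 0 and v, w₁, w₂ ∈ ℝ² satisfy ‖w₁ − v‖ > d, ‖w₂ − v‖ > d, and 0 < ‖w₁ − w₂‖ ≤ d, then the angle ∠ w₁ v w₂ is strictly less than π/3. Consequently, a point lying strictly inside a face of a contact graph with edge length d subtends an angle less than π/3 on each edge of the face, so the face must have at least 7 edges (since the angles at the interior point sum to 2π). -/
open EuclideanGeometry Real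

/-! By the law of cosines, `2ab cos θ = a² + b² - c² ≥ ab + (ab - c²)` for the sides `a, b` at
the vertex and the opposite side `c`. If `c ≤ d < a, b`, then `c² < ab`, so `cos θ > 1/2`, i.e.
`θ < π/3`. -/

namespace EuclideanGeometry

variable {V P : Type*} [NormedAddCommGroup V] [InnerProductSpace ℝ V] [MetricSpace P]
  [NormedAddTorsor V P]

theorem angle_lt_pi_div_three_of_dist_sq_lt {p₁ p p₂ : P}
    (h : dist p₁ p₂ ^ 2 < dist p₁ p * dist p₂ p) : ∠ p₁ p p₂ < π / 3 := by
  have hlaw := law_cos p₁ p p₂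
  have hcos : 1 / 2 < cos (∠ p₁ p p₂) := by
    have hab : 0 < dist p₁ p * dist p₂ p := (sq_nonneg _).trans_lt h
    rw [← mul_lt_mul_iff_of_pos_left hab]
    nlinarith [sq_nonneg (dist p₁ p - dist p₂ p)]
  rw [← cos_pi_div_three] at hcos
  exact (strictAntiOn_cos.lt_iff_gt ⟨by positivity, by linarith [pi_pos]⟩
    ⟨angle_nonneg _ _ _, angle_le_pi _ _ _⟩).1 hcos

end EuclideanGeometry

theorem angle_lt_pi_div_three_of_far_general (d : ℝ)
    (v w₁ w₂ : EuclideanSpace ℝ (Fin 2))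
    (h₁ : ‖w₁ - v‖ > d) (h₂ : ‖w₂ - v‖ > d)
    (h₄ : ‖w₁ - w₂‖ ≤ d) :
    EuclideanGeometry.angle w₁ v w₂ < π / 3 := by
  rw [← dist_eq_norm] at h₁ h₂ h₄
  have hd : 0 ≤ d := dist_nonneg.trans h₄
  apply angle_lt_pi_div_three_of_dist_sq_lt
  calc dist w₁ w₂ ^ 2 ≤ d * d := by rw [sq]; exact mul_self_le_mul_self dist_nonneg h₄
    _ < dist w₁ v * dist w₂ v := mul_lt_mul'' h₁ h₂ hd hd

/-- If a point is strictly farther than `d` from two points that are themselves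
within (positive) distance at most `d` of each other, it sees them at an angle
strictly less than `π / 3`. -/
theorem angle_lt_pi_div_three_of_far (d : ℝ) (hd : 0 < d)
    (v w₁ w₂ : EuclideanSpace ℝ (Fin 2))
    (h₁ : ‖w₁ - v‖ > d) (h₂ : ‖w₂ - v‖ > d)
    (h₃ : 0 < ‖w₁ - w₂‖) (h₄ : ‖w₁ - w₂‖ ≤ d) :
    EuclideanGeometry.angle w₁ v w₂ < π / 3 :=
  angle_lt_pi_div_three_of_far_general d v w₁ w₂ h₁ h₂ h₄
end

section
/- Quantitative isolation of a zero of a quadratic map: let n ≥ 1, let A : ℝⁿ × ℝⁿ → ℝⁿ be a symmetric bilinear map, L : ℝⁿ → ℝⁿ linear, c ∈ ℝⁿ, and define F(x) = A(x, x) + L(x) + c. Suppose F(X₀) = 0 for some X₀ ∈ ℝⁿ, and there is h > 0 such that ‖L(v) + 2·A(X₀, v)‖∞ ≥ h·‖v‖∞ for all v ∈ ℝⁿ, and ‖A(v, v)‖∞ ≤ 4·‖v‖∞² for all v ∈ ℝⁿ. Then for every X ∈ ℝⁿ with 0 < ‖X − X₀‖∞ < h/4 one has F(X) ≠ 0; that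 is, X₀ is the unique zero of F in the open ‖·‖∞-ball of radius h/4 around X₀. -/
/-!
Write a point near `X₀` as `X₀ + w`. Since `F(X₀) = 0`, the symmetric expansion gives
`F(X₀ + w) = dF_{X₀}(w) + A(w, w)`, so a zero `X₀ + w` forces
`h ‖w‖ ≤ ‖dF_{X₀}(w)‖ = ‖A(w, w)‖ ≤ 4 ‖w‖²`, i.e. `h ≤ 4 ‖w‖` as soon as `w ≠ 0`.
-/

section SymmetricExpansion

variable {R M N : Type*} [CommRing R] [AddCommGroup M] [Module R M] [AddCommGroup N] [Module R N]

theorem LinearMap.apply_add_add_of_symm (A : M →ₗ[R] M →ₗ[R] N) (hA : ∀ x y, A x y = A y x)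
    (x w : M) : A (x + w) (x + w) = A x x + (2 : R) • A x w + A w w := by
  simp only [map_add, LinearMap.add_apply, hA w x, two_smul]
  abel

theorem LinearMap.quadratic_add_sub_of_symm (A : M →ₗ[R] M →ₗ[R] N) (hA : ∀ x y, A x y = A y x)
    (L : M →ₗ[R] N) (c : N) (x w : M) :
    (A (x + w) (x + w) + L (x + w) + c) - (A x x + L x + c) = L w + (2 : R) • A x w + A w w := by
  rw [A.apply_add_add_of_symm hA, map_add]
  abel

end SymmetricExpansion

theorem le_mul_norm_of_add_eq_zero {E F : Type*} [SeminormedAddCommGroup E]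
    [SeminormedAddCommGroup F] {D Q : F} {w : E} {h K : ℝ} (hD : h * ‖w‖ ≤ ‖D‖)
    (hQ : ‖Q‖ ≤ K * ‖w‖ ^ 2) (hDQ : D + Q = 0) (hw : 0 < ‖w‖) : h ≤ K * ‖w‖ := by
  have hDQ_norm : ‖D‖ = ‖Q‖ := by rw [eq_neg_of_add_eq_zero_left hDQ, norm_neg]
  refine le_of_mul_le_mul_right ?_ hw
  calc h * ‖w‖ ≤ ‖Q‖ := hDQ_norm ▸ hD
    _ ≤ K * ‖w‖ * ‖w‖ := by rw [mul_assoc, ← sq]; exact hQ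

theorem quadratic_zero_isolation_general (n : ℕ)
    (A : (Fin n → ℝ) →ₗ[ℝ] (Fin n → ℝ) →ₗ[ℝ] (Fin n → ℝ))
    (hA : ∀ x y : Fin n → ℝ, A x y = A y x)
    (L : (Fin n → ℝ) →ₗ[ℝ] (Fin n → ℝ)) (c : Fin n → ℝ)
    (F : (Fin n → ℝ) → (Fin n → ℝ))
    (hF : ∀ x : Fin n → ℝ, F x = A x x + L x + c)
    (X₀ : Fin n → ℝ) (hX₀ : F X₀ = 0)
    (h : ℝ)
    (hlow : ∀ v : Fin n → ℝ, h * ‖v‖ ≤ ‖L v + (2 : ℝ) • A X₀ v‖)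
    (hup : ∀ v : Fin n → ℝ, ‖A v v‖ ≤ 4 * ‖v‖ ^ 2) :
    ∀ X : Fin n → ℝ, 0 < ‖X - X₀‖ → ‖X - X₀‖ < h / 4 → F X ≠ 0 := by
  intro X hpos hlt hFX
  obtain ⟨w, rfl⟩ : ∃ w, X = X₀ + w := ⟨X - X₀, by abel⟩
  rw [add_sub_cancel_left] at hpos hlt
  have hexpand : L w + (2 : ℝ) • A X₀ w + A w w = 0 := by
    rw [← A.quadratic_add_sub_of_symm hA L c, ← hF, ← hF, hFX, hX₀, sub_zero]
  have := le_mul_norm_of_add_eq_zero (hlow w) (hup w) hexpand hpos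
  linarith

/-- Quantitative isolation of a zero of a quadratic map on `ℝⁿ` (with the
sup norm, which is the norm of `Fin n → ℝ`): if `F(x) = A(x,x) + L(x) + c` with
`A` symmetric bilinear, `F(X₀) = 0`, the differential at `X₀` satisfies
`‖L v + 2 A(X₀, v)‖∞ ≥ h ‖v‖∞` and `‖A(v,v)‖∞ ≤ 4 ‖v‖∞²`, then `X₀` is the only
zero of `F` in the open sup-norm ball of radius `h / 4` around `X₀`. -/
theorem quadratic_zero_isolation (n : ℕ) (hn : 1 ≤ n)
    (A : (Fin n → ℝ) →ₗ[ℝ] (Fin n → ℝ) →ₗ[ℝ] (Fin n → ℝ))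
    (hA : ∀ x y : Fin n → ℝ, A x y = A y x)
    (L : (Fin n → ℝ) →ₗ[ℝ] (Fin n → ℝ)) (c : Fin n → ℝ)
    (F : (Fin n → ℝ) → (Fin n → ℝ))
    (hF : ∀ x : Fin n → ℝ, F x = A x x + L x + c)
    (X₀ : Fin n → ℝ) (hX₀ : F X₀ = 0)
    (h : ℝ) (hh : 0 < h)
    (hlow : ∀ v : Fin n → ℝ, h * ‖v‖ ≤ ‖L v + (2 : ℝ) • A X₀ v‖)
    (hup : ∀ v : Fin n → ℝ, ‖A v v‖ ≤ 4 * ‖v‖ ^ 2) :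
    ∀ X : Fin n → ℝ, 0 < ‖X - X₀‖ → ‖X - X₀‖ < h / 4 → F X ≠ 0 :=
  quadratic_zero_isolation_general n A hA L c F hF X₀ hX₀ h hlow hup
end
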